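/- Let ω > 0 and let λ be a nonzero complex number such that either Re(λ) < 0, or Re(λ) = 0 and |λ| > ω. Then i·( log(−iω − λ) − log(iω − λ) ) = −2·atan(ω/λ). -/

import Mathlib

/-!
With `μ = -λ` the two logarithms are taken at `μ ∓ iω`, and `1 ± i·ω/λ = (μ ∓ iω)/μ`, so the
identity reduces to `log ((μ + it)/μ) = log (μ + it) - log μ` for `t = ±ω`. This holds because
`arg (μ + it) - arg μ ∈ (-π, π]`: either both points lie in the open right half-plane, or both
lie on the same open half of the imaginary axis, where `μ + it` is a positive multiple of `μ`.
-/

open Complex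

noncomputable def catan (z : ℂ) : ℂ :=
  (2 * Complex.I)⁻¹ * (Complex.log (1 + Complex.I * z) - Complex.log (1 - Complex.I * z))

namespace Complex

open Real in
theorem log_div_of_arg_sub_mem_Ioc {x y : ℂ} (hx : x ≠ 0) (hy : y ≠ 0)
    (h : arg y - arg x ∈ Set.Ioc (-π) π) : log (y / x) = log y - log x := by
  have harg : arg (y / x) = arg y - arg x := by
    rw [← arg_coe_angle_toReal_eq_arg, arg_div_coe_angle hy hx, ← Real.Angle.coe_sub,
      Real.Angle.toReal_coe_eq_self_iff_mem_Ioc.mpr h]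
  apply Complex.ext
  · simp only [log_re, norm_div, sub_re]
    exact Real.log_div (norm_ne_zero_iff.mpr hy) (norm_ne_zero_iff.mpr hx)
  · simp only [log_im, harg, sub_im]

theorem log_div_of_re_pos {x y : ℂ} (hx : 0 < x.re) (hy : 0 < y.re) :
    log (y / x) = log y - log x := by
  have hx' := abs_lt.mp (abs_arg_lt_pi_div_two_iff.mpr (Or.inl hx))
  have hy' := abs_lt.mp (abs_arg_lt_pi_div_two_iff.mpr (Or.inl hy))
  refine log_div_of_arg_sub_mem_Ioc (ne_zero_of_re_pos hx) (ne_zero_of_re_pos hy) ⟨?_, ?_⟩ <;>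
    linarith

theorem log_one_add_ofReal_mul_I_div {μ : ℂ} {t : ℝ} (h : 0 < μ.re ∨ (μ.re = 0 ∧ |t| < ‖μ‖)) :
    log (1 + t * I / μ) = log (μ + t * I) - log μ := by
  have hμ : μ ≠ 0 := by
    rintro rfl
    rcases h with h | ⟨-, h⟩
    · simp at h
    · linarith [abs_nonneg t, norm_zero (E := ℂ)]
  rw [show 1 + t * I / μ = (μ + t * I) / μ by rw [add_div, div_self hμ]]
  rcases h with hre | ⟨hre, ht⟩
  · exact log_div_of_re_pos hre (by simpa using hre)
  · have hμI : μ = μ.im * I := Complex.ext (by simp [hre]) (by simp)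
    have him : μ.im ≠ 0 := fun h0 => hμ (by rw [hμI, h0]; simp)
    have hnorm : ‖μ‖ = |μ.im| := by
      rw [hμI, norm_mul, norm_I, mul_one, norm_real, Real.norm_eq_abs]
      simp
    set r : ℝ := 1 + t / μ.im
    have hr : 0 < r := by
      have hq : |t / μ.im| < 1 := by
        rwa [abs_div, div_lt_one (abs_pos.mpr him), ← hnorm]
      linarith [(abs_lt.mp hq).1]
    have hshift : μ + t * I = r * μ := by
      apply Complex.ext <;> simp [r, hre]
      field_simp
    rw [hshift]
    refine log_div_of_arg_sub_mem_Ioc hμ (mul_ne_zero (ofReal_ne_zero.mpr hr.ne') hμ) ?_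
    rw [arg_real_mul μ hr, sub_self]
    exact ⟨neg_lt_zero.mpr Real.pi_pos, Real.pi_pos.le⟩

end Complex

theorem stmt_8_general (ω : ℝ) (hω : 0 < ω) (lam : ℂ)
    (h : lam.re < 0 ∨ (lam.re = 0 ∧ ω < ‖lam‖)) :
    Complex.I * (Complex.log (-(Complex.I * (ω : ℂ)) - lam)
      - Complex.log (Complex.I * (ω : ℂ) - lam)) = -2 * catan ((ω : ℂ) / lam) := by
  have hcond (t : ℝ) (ht : |t| = ω) : 0 < (-lam).re ∨ ((-lam).re = 0 ∧ |t| < ‖-lam‖) := by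
    rw [neg_re, norm_neg, ht]
    rcases h with h | ⟨h₁, h₂⟩
    · exact Or.inl (by linarith)
    · exact Or.inr ⟨by simp [h₁], h₂⟩
  have hminus := log_one_add_ofReal_mul_I_div (hcond (-ω) (by rw [abs_neg, abs_of_pos hω]))
  have hplus := log_one_add_ofReal_mul_I_div (hcond ω (abs_of_pos hω))
  have e₁ : 1 + I * (ω / lam) = 1 + (-ω : ℝ) * I / -lam := by push_cast; ring
  have e₂ : 1 - I * (ω / lam) = 1 + (ω : ℝ) * I / -lam := by ring
  have e₃ : -(I * ω) - lam = -lam + (-ω : ℝ) * I := by push_cast; ring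
  have e₄ : I * ω - lam = -lam + (ω : ℝ) * I := by ring
  have hI : -2 * (2 * I)⁻¹ = I := by field_simp; simp [I_sq]
  rw [catan, e₁, e₂, e₃, e₄, hminus, hplus, ← mul_assoc, hI]
  ring

theorem stmt_8 (ω : ℝ) (hω : 0 < ω) (lam : ℂ) (hlam : lam ≠ 0)
    (h : lam.re < 0 ∨ (lam.re = 0 ∧ ω < ‖lam‖)) :
    Complex.I * (Complex.log (-(Complex.I * (ω : ℂ)) - lam)
      - Complex.log (Complex.I * (ω : ℂ) - lam)) = -2 * catan ((ω : ℂ) / lam) :=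
  stmt_8_general ω hω lam h
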